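/- arXiv:1207.3947 — 4 statements merged into one kernel-verified Lean document; each statement's English description precedes it below -/
import Mathlib

section
/- The assignment R_i ↦ g_0 g_i and R'_i ↦ g_i g_0^{−1} (i = 0,…,n−1) extends to a group isomorphism from the presented group B onto the alternating subgroup 𝓑⁺ of the braid group 𝓑 of the Coxeter matrix m. -/
/-- `altProd a b k` is the alternating product `a * b * a * b * ⋯` with `k` factors. -/
def altProd {M : Type*} [Monoid M] (a b : M) : ℕ → M
  | 0 => 1
  | k + 1 => a * altProd b a k

lemma map_altProd {M N : Type*} [Monoid M] [Monoid N] (f : M →* N) (a b : M) :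
    ∀ k, f (altProd a b k) = altProd (f a) (f b) k
  | 0 => by simp [altProd]
  | k + 1 => by simp [altProd, map_mul, map_altProd f b a k]

lemma altProd_self {M : Type*} [Monoid M] (a : M) : ∀ k, altProd a a k = a ^ k
  | 0 => by simp [altProd]
  | k + 1 => by rw [altProd, altProd_self a k, ← pow_succ']

section Braid
variable {n : ℕ}

/-- The braid relations of a Coxeter matrix (entry `0` encodes `∞`, and the
corresponding relation is omitted). -/
def braidRels (M : CoxeterMatrix (Fin n)) : Set (FreeGroup (Fin n)) :=
  { x | ∃ i j : Fin n, i < j ∧ M i j ≠ 0 ∧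
      x = altProd (FreeGroup.of i) (FreeGroup.of j) (M i j) *
        (altProd (FreeGroup.of j) (FreeGroup.of i) (M i j))⁻¹ }

/-- The braid group of a Coxeter matrix. -/
def BraidGroup (M : CoxeterMatrix (Fin n)) : Type _ := PresentedGroup (braidRels M)

instance (M : CoxeterMatrix (Fin n)) : Group (BraidGroup M) :=
  inferInstanceAs (Group (PresentedGroup (braidRels M)))

/-- The generators `g i` of the braid group. -/
def braidGen (M : CoxeterMatrix (Fin n)) (i : Fin n) : BraidGroup M := PresentedGroup.of i

/-- The sign character of the braid group, sending each generator to `-1`. -/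
def braidSign (M : CoxeterMatrix (Fin n)) : BraidGroup M →* ℤˣ :=
  PresentedGroup.toGroup (f := fun _ : Fin n => (-1 : ℤˣ)) (by
    rintro x ⟨i, j, hij, hm, rfl⟩
    simp [map_altProd, altProd_self])

/-- The alternating subgroup of the braid group: the kernel of the sign character. -/
def braidAlt (M : CoxeterMatrix (Fin n)) : Subgroup (BraidGroup M) := (braidSign M).ker

/-- The defining relations of the presented group `B`, with generators
`R_i = Sum.inl i` and `R'_i = Sum.inr i`:  `R'_0 = 1`;
`⟨R'_i,R_j⟩_{m_{ij}} = ⟨R'_j,R_i⟩_{m_{ij}}` and `⟨R_i,R'_j⟩_{m_{ij}} = ⟨R_j,R'_i⟩_{m_{ij}}`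
for `i < j` with `m_{ij}` finite. -/
def bourbakiRels (M : CoxeterMatrix (Fin n)) (hn : 0 < n) :
    Set (FreeGroup (Fin n ⊕ Fin n)) :=
  { x | x = FreeGroup.of (Sum.inr (⟨0, hn⟩ : Fin n)) ∨
      (∃ i j : Fin n, i < j ∧ M i j ≠ 0 ∧
        x = altProd (FreeGroup.of (Sum.inr i)) (FreeGroup.of (Sum.inl j)) (M i j) *
          (altProd (FreeGroup.of (Sum.inr j)) (FreeGroup.of (Sum.inl i)) (M i j))⁻¹) ∨
      (∃ i j : Fin n, i < j ∧ M i j ≠ 0 ∧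
        x = altProd (FreeGroup.of (Sum.inl i)) (FreeGroup.of (Sum.inr j)) (M i j) *
          (altProd (FreeGroup.of (Sum.inl j)) (FreeGroup.of (Sum.inr i)) (M i j))⁻¹) }

/-!
The map `φ = toBraid : R_i ↦ g₀ g_i, R'_i ↦ g_i g₀⁻¹` respects the relations of `B` because
alternating products of `u g⁻¹` and `g v` telescope, and it lands in the kernel of the sign. Its
image contains `g₀²` and is stable under conjugation by `g₀`, so the image together with its
translate by `g₀` is a subgroup containing every `g_i`, i.e. all of `𝓑`; as `g₀` is odd, the image
is exactly `𝓑⁺`.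

For injectivity, conjugation by `g₀` lifts to the endomorphism `σ = shift : R_i ↦ R₀ R'_i,
R'_i ↦ R_i R₀⁻¹` of `B`, whose square is conjugation by `R₀`, so `σ` is an automorphism. In
`E = B ⋊_σ ℤ` the element `z = (R₀⁻¹, 2)` is central, `g_i ↦ (R'_i, 1)` defines
`ψ = ofBraid : 𝓑 → E`, and `ψ (φ b) = (b, 0) · z ^ deg b` with `deg` counting the letters `R_i`;
the `ℤ`-component `2 deg b` and then the `B`-component recover `b`.
-/
section AltProd

lemma altProd_add_two {M : Type*} [Monoid M] (a b : M) (k : ℕ) :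
    altProd a b (k + 2) = a * b * altProd a b k := by
  simp only [altProd, mul_assoc]

lemma altProd_eq_pow_mul_pow {M : Type*} [Monoid M] (a b : M) :
    ∀ k, altProd a b k = (a * b) ^ (k / 2) * a ^ (k % 2)
  | 0 => by simp [altProd]
  | 1 => by simp [altProd]
  | k + 2 => by
    rw [altProd_add_two, altProd_eq_pow_mul_pow a b k, Nat.add_mod_right,
      Nat.add_div_right k two_pos, pow_succ']
    simp only [mul_assoc]

variable {G : Type*} [Group G]

lemma altProd_mul_inv_mul (a b c : G) (k : ℕ) :
    altProd (a * c⁻¹) (c * b) k = altProd a b k * c⁻¹ ^ (k % 2) := by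
  rw [altProd_eq_pow_mul_pow, altProd_eq_pow_mul_pow, show a * c⁻¹ * (c * b) = a * b by group]
  rcases Nat.mod_two_eq_zero_or_one k with h | h <;> simp [h, mul_assoc]

lemma altProd_mul_mul_inv (a b c : G) (k : ℕ) :
    altProd (c * a) (b * c⁻¹) k = c * altProd a b k * c⁻¹ ^ ((k + 1) % 2) := by
  rw [altProd_eq_pow_mul_pow, altProd_eq_pow_mul_pow,
    show c * a * (b * c⁻¹) = c * (a * b) * c⁻¹ by group, conj_pow]
  rcases Nat.mod_two_eq_zero_or_one k with h | h <;> simp [h, Nat.add_mod, mul_assoc]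

lemma altProd_eq_altProd_mul_of_mul_eq {a b a' b' w z : G} (ha : a = a' * w)
    (hab : a * b = a' * b' * z) (hza : Commute z a') (hzb : Commute z b') (k : ℕ) :
    altProd a b k = altProd a' b' k * (z ^ (k / 2) * w ^ (k % 2)) := by
  rw [altProd_eq_pow_mul_pow, altProd_eq_pow_mul_pow, hab,
    ((hza.mul_right hzb).symm).mul_pow, ha]
  rcases Nat.mod_two_eq_zero_or_one k with h | h
  · simp [h]
  · simp only [h, pow_one, mul_assoc, (hza.pow_left (k / 2)).left_comm]

end AltProd

lemma FreeGroup.lift_altProd_mul_inv_eq_one_iff {α G : Type*} [Group G] (f : α → G)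
    (a b c d : α) (k : ℕ) :
    FreeGroup.lift f (altProd (of a) (of b) k * (altProd (of c) (of d) k)⁻¹) = 1 ↔
      altProd (f a) (f b) k = altProd (f c) (f d) k := by
  simp [map_altProd, mul_inv_eq_one]

lemma PresentedGroup.altProd_of_eq_of_mem {α : Type*} {rels : Set (FreeGroup α)}
    {a b c d : α} {k : ℕ}
    (h : altProd (FreeGroup.of a) (FreeGroup.of b) k *
      (altProd (FreeGroup.of c) (FreeGroup.of d) k)⁻¹ ∈ rels) :
    altProd (of a : PresentedGroup rels) (of b) k = altProd (of c) (of d) k := by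
  have := mk_eq_mk_of_mul_inv_mem h
  rwa [map_altProd, map_altProd] at this

lemma Subgroup.mem_or_inv_mul_mem_of_closure_eq_top {G : Type*} [Group G] {H : Subgroup G}
    {g : G} {S : Set G} (hS : closure S = ⊤) (hsq : g * g ∈ H)
    (hconj : ∀ h ∈ H, g * h * g⁻¹ ∈ H) (hSg : ∀ s ∈ S, g⁻¹ * s ∈ H) (x : G) :
    x ∈ H ∨ g⁻¹ * x ∈ H := by
  have hconj' (h : G) (hh : h ∈ H) : g⁻¹ * h * g ∈ H := by
    have := H.mul_mem (H.mul_mem (H.inv_mem hsq) (hconj h hh)) hsq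
    convert this using 1; group
  have hx : x ∈ closure S := hS ▸ mem_top x
  induction hx using closure_induction with
  | mem s hs => exact .inr (hSg s hs)
  | one => exact .inl H.one_mem
  | mul a b _ _ ha hb =>
    rcases ha with ha | ha <;> rcases hb with hb | hb
    · exact .inl (H.mul_mem ha hb)
    · exact .inr (by convert H.mul_mem (hconj' a ha) hb using 1; group)
    · exact .inr (by convert H.mul_mem ha hb using 1; group)
    · exact .inl (by convert H.mul_mem (hconj _ ha) (H.mul_mem hsq hb) using 1; group)
  | inv a _ ha =>
    rcases ha with ha | ha
    · exact .inl (H.inv_mem ha)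
    · exact .inr (by convert H.mul_mem (hconj' _ (H.inv_mem ha)) (H.inv_mem hsq) using 1; group)

def BraidRelated {G : Type*} [Monoid G] (M : CoxeterMatrix (Fin n)) (x y : Fin n → G) : Prop :=
  ∀ i j, i < j → M i j ≠ 0 → altProd (x i) (y j) (M i j) = altProd (x j) (y i) (M i j)

lemma braidRelated_const {G : Type*} [Monoid G] (M : CoxeterMatrix (Fin n)) (a b : G) :
    BraidRelated M (fun _ => a) (fun _ => b) :=
  fun _ _ _ _ => rfl

lemma braidRelated_braidGen (M : CoxeterMatrix (Fin n)) :
    BraidRelated M (braidGen M) (braidGen M) :=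
  fun i j hij hm => PresentedGroup.altProd_of_eq_of_mem ⟨i, j, hij, hm, rfl⟩

def BraidGroup.lift {G : Type*} [Group G] (M : CoxeterMatrix (Fin n)) (f : Fin n → G)
    (hf : BraidRelated M f f) : BraidGroup M →* G :=
  PresentedGroup.toGroup (f := f) (by
    rintro r ⟨i, j, hij, hm, rfl⟩
    exact (FreeGroup.lift_altProd_mul_inv_eq_one_iff ..).2 (hf i j hij hm))

@[simp]
lemma BraidGroup.lift_braidGen {G : Type*} [Group G] (M : CoxeterMatrix (Fin n))
    (f : Fin n → G) (hf : BraidRelated M f f) (i : Fin n) :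
    BraidGroup.lift M f hf (braidGen M i) = f i :=
  PresentedGroup.toGroup.of _

lemma closure_range_braidGen (M : CoxeterMatrix (Fin n)) :
    Subgroup.closure (Set.range (braidGen M)) = ⊤ :=
  PresentedGroup.closure_range_of _

@[simp]
lemma braidSign_braidGen (M : CoxeterMatrix (Fin n)) (i : Fin n) :
    braidSign M (braidGen M i) = -1 :=
  PresentedGroup.toGroup.of _

abbrev BourbakiGroup (M : CoxeterMatrix (Fin n)) (hn : 0 < n) :=
  PresentedGroup (bourbakiRels M hn)

namespace BourbakiGroup

variable (M : CoxeterMatrix (Fin n)) (hn : 0 < n)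

def R (i : Fin n) : BourbakiGroup M hn := PresentedGroup.of (Sum.inl i)

def R' (i : Fin n) : BourbakiGroup M hn := PresentedGroup.of (Sum.inr i)

lemma R'_zero : R' M hn ⟨0, hn⟩ = 1 :=
  PresentedGroup.one_of_mem (Or.inl rfl)

lemma braidRelated_R'_R : BraidRelated M (R' M hn) (R M hn) :=
  fun i j hij hm => PresentedGroup.altProd_of_eq_of_mem (Or.inr (Or.inl ⟨i, j, hij, hm, rfl⟩))

lemma braidRelated_R_R' : BraidRelated M (R M hn) (R' M hn) :=
  fun i j hij hm => PresentedGroup.altProd_of_eq_of_mem (Or.inr (Or.inr ⟨i, j, hij, hm, rfl⟩))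

section Lift

variable {G : Type*} [Group G] (x y : Fin n → G) (hxy : BraidRelated M x y)
  (hyx : BraidRelated M y x)

def lift : BourbakiGroup M hn →* G :=
  PresentedGroup.toGroup (f := Sum.elim (fun i => x ⟨0, hn⟩ * y i) (fun i => x i * (x ⟨0, hn⟩)⁻¹))
    (by
      rintro r (rfl | ⟨i, j, hij, hm, rfl⟩ | ⟨i, j, hij, hm, rfl⟩)
      · simp
      · rw [FreeGroup.lift_altProd_mul_inv_eq_one_iff]
        simp only [Sum.elim_inl, Sum.elim_inr, altProd_mul_inv_mul, hxy i j hij hm]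
      · rw [FreeGroup.lift_altProd_mul_inv_eq_one_iff]
        simp only [Sum.elim_inl, Sum.elim_inr, altProd_mul_mul_inv, hyx i j hij hm])

@[simp]
lemma lift_R (i : Fin n) : lift M hn x y hxy hyx (R M hn i) = x ⟨0, hn⟩ * y i :=
  PresentedGroup.toGroup.of _

@[simp]
lemma lift_R' (i : Fin n) : lift M hn x y hxy hyx (R' M hn i) = x i * (x ⟨0, hn⟩)⁻¹ :=
  PresentedGroup.toGroup.of _

end Lift

lemma hom_ext {G : Type*} [Group G] {f g : BourbakiGroup M hn →* G}
    (hR : ∀ i, f (R M hn i) = g (R M hn i)) (hR' : ∀ i, f (R' M hn i) = g (R' M hn i)) :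
    f = g :=
  PresentedGroup.ext (Sum.rec hR hR')

def toBraid : BourbakiGroup M hn →* BraidGroup M :=
  lift M hn (braidGen M) (braidGen M) (braidRelated_braidGen M) (braidRelated_braidGen M)

@[simp]
lemma toBraid_R (i : Fin n) : toBraid M hn (R M hn i) = braidGen M ⟨0, hn⟩ * braidGen M i :=
  lift_R ..

@[simp]
lemma toBraid_R' (i : Fin n) :
    toBraid M hn (R' M hn i) = braidGen M i * (braidGen M ⟨0, hn⟩)⁻¹ :=
  lift_R' ..

lemma range_toBraid_le : (toBraid M hn).range ≤ braidAlt M := by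
  refine ((toBraid M hn).range_le_ker_iff (braidSign M)).2
    (hom_ext M hn (fun i => ?_) (fun i => ?_)) <;> simp

def shiftHom : BourbakiGroup M hn →* BourbakiGroup M hn :=
  lift M hn (R M hn) (R' M hn) (braidRelated_R_R' M hn) (braidRelated_R'_R M hn)

@[simp]
lemma shiftHom_R (i : Fin n) : shiftHom M hn (R M hn i) = R M hn ⟨0, hn⟩ * R' M hn i :=
  lift_R ..

@[simp]
lemma shiftHom_R' (i : Fin n) : shiftHom M hn (R' M hn i) = R M hn i * (R M hn ⟨0, hn⟩)⁻¹ :=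
  lift_R' ..

lemma shiftHom_R_zero : shiftHom M hn (R M hn ⟨0, hn⟩) = R M hn ⟨0, hn⟩ := by
  simp [R'_zero]

lemma shiftHom_shiftHom (b : BourbakiGroup M hn) :
    shiftHom M hn (shiftHom M hn b) = R M hn ⟨0, hn⟩ * b * (R M hn ⟨0, hn⟩)⁻¹ := by
  have h : (shiftHom M hn).comp (shiftHom M hn) = (MulAut.conj (R M hn ⟨0, hn⟩)).toMonoidHom :=
    hom_ext M hn (fun i => by simp [R'_zero, mul_assoc]) (fun i => by simp [R'_zero, mul_assoc])
  simpa using DFunLike.congr_fun h b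

lemma toBraid_shiftHom (b : BourbakiGroup M hn) :
    toBraid M hn (shiftHom M hn b) =
      braidGen M ⟨0, hn⟩ * toBraid M hn b * (braidGen M ⟨0, hn⟩)⁻¹ := by
  have h : (toBraid M hn).comp (shiftHom M hn) =
      (MulAut.conj (braidGen M ⟨0, hn⟩)).toMonoidHom.comp (toBraid M hn) :=
    hom_ext M hn (fun i => by simp [mul_assoc]) (fun i => by simp [mul_assoc])
  simpa using DFunLike.congr_fun h b

lemma braidAlt_le_range_toBraid : braidAlt M ≤ (toBraid M hn).range := by
  intro x hx
  have hsq : braidGen M ⟨0, hn⟩ * braidGen M ⟨0, hn⟩ ∈ (toBraid M hn).range :=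
    ⟨R M hn ⟨0, hn⟩, toBraid_R ..⟩
  refine (Subgroup.mem_or_inv_mul_mem_of_closure_eq_top (closure_range_braidGen M) hsq
    ?_ ?_ x).resolve_right fun ⟨b, hb⟩ => ?_
  · rintro _ ⟨b, rfl⟩
    exact ⟨shiftHom M hn b, toBraid_shiftHom ..⟩
  · rintro _ ⟨i, rfl⟩
    exact ⟨(R M hn ⟨0, hn⟩)⁻¹ * R M hn i, by simp⟩
  · have := MonoidHom.mem_ker.1 (range_toBraid_le M hn ⟨b, hb⟩)
    rw [map_mul, map_inv, MonoidHom.mem_ker.1 hx] at this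
    simp at this

lemma shiftHom_bijective : Function.Bijective (shiftHom M hn) := by
  refine ⟨fun a b h => ?_, fun b => ⟨shiftHom M hn ((R M hn ⟨0, hn⟩)⁻¹ * b * R M hn ⟨0, hn⟩), ?_⟩⟩
  · simpa [shiftHom_shiftHom] using congrArg (shiftHom M hn) h
  · rw [shiftHom_shiftHom]; group

noncomputable def shift : BourbakiGroup M hn ≃* BourbakiGroup M hn :=
  MulEquiv.ofBijective (shiftHom M hn) (shiftHom_bijective M hn)

@[simp]
lemma shift_apply (b : BourbakiGroup M hn) : shift M hn b = shiftHom M hn b := rfl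

lemma zpow_shift_R_zero (k : ℤ) : (shift M hn ^ k) (R M hn ⟨0, hn⟩) = R M hn ⟨0, hn⟩ := by
  have := Equiv.Perm.zpow_apply_eq_self_of_apply_eq_self (f := MulAut.toPerm _ (shift M hn))
    (x := R M hn ⟨0, hn⟩) (shiftHom_R_zero M hn) k
  rwa [← map_zpow] at this

lemma shift_sq (b : BourbakiGroup M hn) :
    (shift M hn ^ 2) b = R M hn ⟨0, hn⟩ * b * (R M hn ⟨0, hn⟩)⁻¹ := by
  rw [pow_two, MulAut.mul_apply, shift_apply, shift_apply, shiftHom_shiftHom]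

abbrev Ext := BourbakiGroup M hn ⋊[zpowersHom _ (shift M hn)] Multiplicative ℤ

noncomputable def central : Ext M hn := SemidirectProduct.inl (R M hn ⟨0, hn⟩)⁻¹ *
  SemidirectProduct.inr (Multiplicative.ofAdd 2)

lemma commute_central (x : Ext M hn) : Commute x (central M hn) := by
  ext
  · simp [central, zpow_shift_R_zero, shift_sq, mul_assoc]
  · simp [central, mul_comm]

noncomputable def extGen (i : Fin n) : Ext M hn :=
  SemidirectProduct.inl (R' M hn i) * SemidirectProduct.inr (Multiplicative.ofAdd 1)

lemma extGen_mul_extGen (i j : Fin n) :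
    extGen M hn i * extGen M hn j =
      SemidirectProduct.inl (R' M hn i) * SemidirectProduct.inl (R M hn j) * central M hn := by
  ext
  · simp [extGen, central, mul_assoc]
  · simp [extGen, central]

lemma braidRelated_extGen : BraidRelated M (extGen M hn) (extGen M hn) := fun i j hij hm => by
  rw [altProd_eq_altProd_mul_of_mul_eq (a := extGen M hn i) rfl (extGen_mul_extGen M hn i j)
      (commute_central M hn _).symm (commute_central M hn _).symm,
    altProd_eq_altProd_mul_of_mul_eq (a := extGen M hn j) rfl (extGen_mul_extGen M hn j i)
      (commute_central M hn _).symm (commute_central M hn _).symm,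
    ← map_altProd, ← map_altProd, braidRelated_R'_R M hn i j hij hm]

noncomputable def ofBraid : BraidGroup M →* Ext M hn :=
  BraidGroup.lift M (extGen M hn) (braidRelated_extGen M hn)

def degree : BourbakiGroup M hn →* Multiplicative ℤ :=
  lift M hn (fun _ => 1) (fun _ => Multiplicative.ofAdd 1) (braidRelated_const M _ _)
    (braidRelated_const M _ _)

@[simp]
lemma degree_R (i : Fin n) : degree M hn (R M hn i) = Multiplicative.ofAdd 1 := by
  simp [degree]

@[simp]
lemma degree_R' (i : Fin n) : degree M hn (R' M hn i) = 1 := by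
  simp [degree]

lemma rightHom_central : SemidirectProduct.rightHom (central M hn) = Multiplicative.ofAdd 2 := by
  simp [central]

noncomputable def toExt : BourbakiGroup M hn →* Ext M hn where
  toFun b := SemidirectProduct.inl b * central M hn ^ Multiplicative.toAdd (degree M hn b)
  map_one' := by simp
  map_mul' a b := by
    simp only [map_mul, toAdd_mul, zpow_add]
    exact ((commute_central M hn _).zpow_right _).mul_mul_mul_comm _ _

lemma toExt_injective : Function.Injective (toExt M hn) := by
  refine (injective_iff_map_eq_one _).2 fun b hb => ?_
  have hdeg : Multiplicative.toAdd (degree M hn b) = 0 := by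
    have := congrArg SemidirectProduct.rightHom hb
    simp only [toExt, MonoidHom.coe_mk, OneHom.coe_mk, map_mul, map_zpow, map_one,
      SemidirectProduct.rightHom_inl, rightHom_central, one_mul] at this
    rw [← ofAdd_zsmul, ofAdd_eq_one, smul_eq_mul] at this
    omega
  exact SemidirectProduct.inl_injective (by simpa [toExt, hdeg] using hb)

lemma ofBraid_comp_toBraid : (ofBraid M hn).comp (toBraid M hn) = toExt M hn :=
  hom_ext M hn (fun i => by simp [ofBraid, toExt, extGen_mul_extGen, R'_zero])
    (fun i => by simp [ofBraid, toExt, extGen, R'_zero])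

lemma toBraid_injective : Function.Injective (toBraid M hn) := by
  have h := toExt_injective M hn
  rw [← ofBraid_comp_toBraid, MonoidHom.coe_comp] at h
  exact h.of_comp

lemma range_toBraid : (toBraid M hn).range = braidAlt M :=
  le_antisymm (range_toBraid_le M hn) (braidAlt_le_range_toBraid M hn)

end BourbakiGroup

/-- The assignment `R_i ↦ g_0 g_i`, `R'_i ↦ g_i g_0⁻¹` extends to a group isomorphism
from the presented group `B` onto the alternating subgroup `𝓑⁺` of the braid group. -/
theorem bourbaki_presentation_of_alternating_braid_group
    (n : ℕ) (hn : 0 < n) (M : CoxeterMatrix (Fin n)) :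
    ∃ e : PresentedGroup (bourbakiRels M hn) ≃* braidAlt M,
      (∀ i : Fin n,
        ((e (PresentedGroup.of (Sum.inl i)) : braidAlt M) : BraidGroup M) =
          braidGen M ⟨0, hn⟩ * braidGen M i) ∧
      (∀ i : Fin n,
        ((e (PresentedGroup.of (Sum.inr i)) : braidAlt M) : BraidGroup M) =
          braidGen M i * (braidGen M ⟨0, hn⟩)⁻¹) :=
  ⟨(MonoidHom.ofInjective (BourbakiGroup.toBraid_injective M hn)).trans
      (MulEquiv.subgroupCongr (BourbakiGroup.range_toBraid M hn)),
    BourbakiGroup.toBraid_R M hn, BourbakiGroup.toBraid_R' M hn⟩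
end Braid
end

section
/- Let U be the group presented by two generators g_0, g_1 and the single relation g_0 g_1 g_0 g_1 = g_1 g_0 g_1 g_0. Then the element g_1 g_0^{−1} does not belong to the subgroup of U generated by g_0² and g_0 g_1. -/
/-- The dihedral-type braid relation `g₀g₁g₀g₁ = g₁g₀g₁g₀`, as a relator.
Here `g₀ = FreeGroup.of false` and `g₁ = FreeGroup.of true`. -/
def dihedralBraidRels : Set (FreeGroup Bool) :=
  { FreeGroup.of false * FreeGroup.of true * FreeGroup.of false * FreeGroup.of true *
      (FreeGroup.of true * FreeGroup.of false * FreeGroup.of true * FreeGroup.of false)⁻¹ }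

/-- The braid group `U` on two generators `g₀, g₁` with `g₀g₁g₀g₁ = g₁g₀g₁g₀`. -/
def DihedralBraidGroup : Type := PresentedGroup dihedralBraidRels

instance : Group DihedralBraidGroup := inferInstanceAs (Group (PresentedGroup dihedralBraidRels))

/-- The generator `g₀` of `U`. -/
def ug₀ : DihedralBraidGroup := PresentedGroup.of false

/-- The generator `g₁` of `U`. -/
def ug₁ : DihedralBraidGroup := PresentedGroup.of true

/-- The image of `g₀` in `S₃`: the transposition `(1 2)`. -/
def px : Equiv.Perm (Fin 3) := Equiv.swap 1 2

/-- The image of `g₁` in `S₃`: the 3-cycle `(0 1 2)`. -/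
def py : Equiv.Perm (Fin 3) := Equiv.swap 0 2 * Equiv.swap 0 1

/-- The map of generators. -/
def pf : Bool → Equiv.Perm (Fin 3) := fun b => if b then py else px

lemma pf_rels : ∀ r ∈ dihedralBraidRels, FreeGroup.lift pf r = 1 := by
  intro r hr
  simp only [dihedralBraidRels, Set.mem_singleton_iff] at hr
  subst hr
  simp only [map_mul, map_inv, FreeGroup.lift_apply_of, pf, px, py]
  decide

/-- The homomorphism `U → S₃`. -/
def pφ : DihedralBraidGroup →* Equiv.Perm (Fin 3) := PresentedGroup.toGroup pf_rels

/-- The subgroup `{1, (0 2)}` of `S₃`. -/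
def pH : Subgroup (Equiv.Perm (Fin 3)) where
  carrier := {1, Equiv.swap 0 2}
  one_mem' := Or.inl rfl
  mul_mem' := by
    rintro a b (rfl | rfl) (rfl | rfl) <;>
      simp only [Set.mem_insert_iff, Set.mem_singleton_iff] <;> decide
  inv_mem' := by
    rintro a (rfl | rfl) <;>
      simp only [Set.mem_insert_iff, Set.mem_singleton_iff] <;> decide

lemma pφ_g₀ : pφ ug₀ = px := PresentedGroup.toGroup.of pf_rels
lemma pφ_g₁ : pφ ug₁ = py := PresentedGroup.toGroup.of pf_rels

/-- In the group `U = ⟨g₀, g₁ | g₀g₁g₀g₁ = g₁g₀g₁g₀⟩`, the element `g₁ g₀⁻¹` does not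
belong to the subgroup generated by `g₀²` and `g₀ g₁`. -/
theorem not_mem_closure_sq_mul :
    ug₁ * ug₀⁻¹ ∉ Subgroup.closure ({ug₀ ^ 2, ug₀ * ug₁} : Set DihedralBraidGroup) := by
  intro hmem
  have h1 : pφ (ug₁ * ug₀⁻¹) ∈ Subgroup.map pφ
      (Subgroup.closure ({ug₀ ^ 2, ug₀ * ug₁} : Set DihedralBraidGroup)) :=
    Subgroup.mem_map_of_mem pφ hmem
  rw [MonoidHom.map_closure] at h1
  have h2 : Subgroup.closure (pφ '' ({ug₀ ^ 2, ug₀ * ug₁} : Set DihedralBraidGroup)) ≤ pH := by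
    rw [Subgroup.closure_le]
    rintro x ⟨u, hu, rfl⟩
    rcases hu with rfl | rfl
    · show pφ (ug₀ ^ 2) ∈ ({1, Equiv.swap 0 2} : Set _)
      rw [map_pow, pφ_g₀]
      left; decide
    · show pφ (ug₀ * ug₁) ∈ ({1, Equiv.swap 0 2} : Set _)
      rw [map_mul, pφ_g₀, pφ_g₁]
      right
      show px * py = _
      decide
  have h3 := h2 h1
  rw [map_mul, map_inv, pφ_g₀, pφ_g₁] at h3
  have : py * px⁻¹ ∈ ({1, Equiv.swap 0 2} : Set (Equiv.Perm (Fin 3))) := h3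
  revert this
  decide
end

section
/- Let U be the group presented by two generators g_0, g_1 and the single relation g_0 g_1 g_0 g_1 = g_1 g_0 g_1 g_0. Then the element g_0 g_1 does not belong to the subgroup of U generated by g_0² and g_1 g_0^{−1}. -/
/-- Images of the generators in `Perm (Fin 3)`: `false ↦ (0 1)`, `true ↦ (0 2 1)`. -/
def permOfGen : Bool → Equiv.Perm (Fin 3)
  | false => Equiv.swap 0 1
  | true => (finRotate 3)⁻¹

lemma permOfGen_rel : ∀ r ∈ dihedralBraidRels, FreeGroup.lift permOfGen r = 1 := by
  intro r hr
  rw [Set.mem_singleton_iff.mp hr]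
  simp only [map_mul, map_inv, FreeGroup.lift_apply_of]
  decide

/-- The resulting homomorphism `U →* Perm (Fin 3)`. -/
def permHom : DihedralBraidGroup →* Equiv.Perm (Fin 3) :=
  PresentedGroup.toGroup permOfGen_rel

lemma permHom_g₀ : permHom ug₀ = Equiv.swap 0 1 := PresentedGroup.toGroup.of permOfGen_rel
lemma permHom_g₁ : permHom ug₁ = (finRotate 3)⁻¹ := PresentedGroup.toGroup.of permOfGen_rel

/-- In the group `U = ⟨g₀, g₁ | g₀g₁g₀g₁ = g₁g₀g₁g₀⟩`, the element `g₀ g₁` does not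
belong to the subgroup generated by `g₀²` and `g₁ g₀⁻¹`. -/
theorem not_mem_closure_sq_mul' :
    ug₀ * ug₁ ∉ Subgroup.closure ({ug₀ ^ 2, ug₁ * ug₀⁻¹} : Set DihedralBraidGroup) := by
  intro h
  have key : ∀ u ∈ Subgroup.closure ({ug₀ ^ 2, ug₁ * ug₀⁻¹} : Set DihedralBraidGroup),
      permHom u 0 = 0 := by
    intro u hu
    induction hu using Subgroup.closure_induction with
    | mem x hx =>
      rcases hx with hx | hx <;> subst hx <;>
        simp only [map_mul, map_pow, map_inv, permHom_g₀, permHom_g₁] <;> decide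
    | one => simp
    | mul x y _ _ hx hy =>
      rw [map_mul]
      simp only [Equiv.Perm.mul_apply]
      rw [hy, hx]
    | inv x _ hx =>
      rw [map_inv]
      exact (Equiv.symm_apply_eq _).mpr hx.symm
  have := key _ h
  rw [map_mul, permHom_g₀, permHom_g₁] at this
  exact absurd this (by decide)
end

section
/- For n ≥ 2, the alternating subgroup 𝓑⁺(A_n) of the type A braid group is isomorphic to the group presented by generators R_0, R_1, …, R_{n−1} and relations: R_0R_1R_0 = R_1²R_0^{−1}R_1²; R_0R_j = R_jR_0 for j = 2,…,n−1; R_2R_1R_2 = R_1²R_0^{−1}R_2R_0^{−1}R_1²; R_2R_1²R_2 = R_0R_1R_2R_0^{−1}R_1R_0; R_1²R_j = R_jR_1R_0 and R_jR_1² = R_0R_1R_j for j = 3,…,n−1; R_iR_{i+1}R_i = R_{i+1}R_iR_{i+1} for i = 2,…,n−2; R_iR_j = R_jR_i for i,j = 2,…,n−1 with |i−j| > 1. An isomorphism is induced by R_i ↦ g_0 g_i (i = 0,…,n−1). -/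
/-- Relations of the type A braid group on the `n + 2` generators `g_0, …, g_{n+1}`:
`g_i g_{i+1} g_i = g_{i+1} g_i g_{i+1}` and `g_i g_j = g_j g_i` for `|i-j| > 1`.
(The `n` here corresponds to `n - 2` in the statement "for `n ≥ 2`".) -/
def braidARels (n : ℕ) : Set (FreeGroup (Fin (n + 2))) :=
  { x | (∃ i : Fin (n + 2), (i : ℕ) < n + 1 ∧
          x = FreeGroup.of i * FreeGroup.of (i + 1) * FreeGroup.of i *
            (FreeGroup.of (i + 1) * FreeGroup.of i * FreeGroup.of (i + 1))⁻¹) ∨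
        (∃ i j : Fin (n + 2), (i : ℕ) + 1 < (j : ℕ) ∧
          x = FreeGroup.of i * FreeGroup.of j * (FreeGroup.of j * FreeGroup.of i)⁻¹) }

/-- The type A braid group `𝓑(A_{n+2})`. -/
def BraidGroupA (n : ℕ) : Type := PresentedGroup (braidARels n)

instance (n : ℕ) : Group (BraidGroupA n) := inferInstanceAs (Group (PresentedGroup (braidARels n)))

/-- The generators of the type A braid group. -/
def braidAGen (n : ℕ) (i : Fin (n + 2)) : BraidGroupA n := PresentedGroup.of i

/-- The sign character of the type A braid group, sending each generator to `-1`. -/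
def braidASign (n : ℕ) : BraidGroupA n →* ℤˣ :=
  PresentedGroup.toGroup (f := fun _ : Fin (n + 2) => (-1 : ℤˣ)) (by
    rintro x (⟨i, hi, rfl⟩ | ⟨i, j, hij, rfl⟩) <;> simp)

/-- The alternating subgroup `𝓑⁺(A_{n+2})` of the type A braid group. -/
def braidAAlt (n : ℕ) : Subgroup (BraidGroupA n) := (braidASign n).ker

/-- The relations of the Bourbaki-style presentation of `𝓑⁺(A_{n+2})`, on the generators
`R_0, …, R_{n+1}`. -/
def altBraidARels (n : ℕ) : Set (FreeGroup (Fin (n + 2))) :=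
  { x | x = FreeGroup.of 0 * FreeGroup.of 1 * FreeGroup.of 0 *
          (FreeGroup.of 1 ^ 2 * (FreeGroup.of 0)⁻¹ * FreeGroup.of 1 ^ 2)⁻¹ ∨
        (∃ j : Fin (n + 2), 2 ≤ (j : ℕ) ∧
          x = FreeGroup.of 0 * FreeGroup.of j * (FreeGroup.of j * FreeGroup.of 0)⁻¹) ∨
        (1 ≤ n ∧
          x = FreeGroup.of 2 * FreeGroup.of 1 * FreeGroup.of 2 *
            (FreeGroup.of 1 ^ 2 * (FreeGroup.of 0)⁻¹ * FreeGroup.of 2 * (FreeGroup.of 0)⁻¹ *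
              FreeGroup.of 1 ^ 2)⁻¹) ∨
        (1 ≤ n ∧
          x = FreeGroup.of 2 * FreeGroup.of 1 ^ 2 * FreeGroup.of 2 *
            (FreeGroup.of 0 * FreeGroup.of 1 * FreeGroup.of 2 * (FreeGroup.of 0)⁻¹ *
              FreeGroup.of 1 * FreeGroup.of 0)⁻¹) ∨
        (∃ j : Fin (n + 2), 3 ≤ (j : ℕ) ∧
          (x = FreeGroup.of 1 ^ 2 * FreeGroup.of j *
              (FreeGroup.of j * FreeGroup.of 1 * FreeGroup.of 0)⁻¹ ∨
           x = FreeGroup.of j * FreeGroup.of 1 ^ 2 *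
              (FreeGroup.of 0 * FreeGroup.of 1 * FreeGroup.of j)⁻¹)) ∨
        (∃ i : Fin (n + 2), 2 ≤ (i : ℕ) ∧ (i : ℕ) < n + 1 ∧
          x = FreeGroup.of i * FreeGroup.of (i + 1) * FreeGroup.of i *
            (FreeGroup.of (i + 1) * FreeGroup.of i * FreeGroup.of (i + 1))⁻¹) ∨
        (∃ i j : Fin (n + 2), 2 ≤ (i : ℕ) ∧ (i : ℕ) + 1 < (j : ℕ) ∧
          x = FreeGroup.of i * FreeGroup.of j * (FreeGroup.of j * FreeGroup.of i)⁻¹) }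

/-!
Write `P` for the presented group, `R_i` (`r i`) for its generators and `g_i` for the braid
generators. Sending `R_1` to `R_1² R_0⁻¹` and fixing the other generators defines an endomorphism
`τ` (`twist`) of `P` with `τ² = conj R_0`, so `τ` is an automorphism, and `Φ : R_i ↦ g_0 g_i`
(`ofAlt`) intertwines `τ` with conjugation by `g_0`. The braid relations hold for
`g_i ↦ (τ⁻¹ R_i, -1)` in `P ⋊_τ ℤ`, giving `Ψ : 𝓑(A_n) → P ⋊_τ ℤ` (`toTwisted`) with left
inverse `(p, m) ↦ Φ(p) g_0^m`. As `τ²` is conjugation by `R_0`, `(p, 2k) ↦ p R_0^k` (`retract`)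
is a homomorphism on the even part of `P ⋊_τ ℤ`, and composed with `Ψ` it inverts `Φ` on
`𝓑⁺(A_n)`.
-/

open SemidirectProduct Multiplicative

section

variable {P : Type*} [Group P]

abbrev TwistedProd (σ : MulAut P) : Type _ := P ⋊[zpowersHom (MulAut P) σ] Multiplicative ℤ

namespace TwistedProd

variable {σ : MulAut P}

def gen (σ : MulAut P) : TwistedProd σ := inr (ofAdd 1)

lemma gen_zpow_mul_inl_mul_inv (k : ℤ) (p : P) :
    gen σ ^ k * inl p * (gen σ ^ k)⁻¹ = inl ((σ ^ k) p) := by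
  rw [gen, ← map_zpow, ← map_inv, ← inl_aut, zpowersHom_apply, ← ofAdd_zsmul, smul_eq_mul,
    mul_one, toAdd_ofAdd]

lemma braid_of_braid {a b : P} (h : (σ ^ 2) a * σ b * a = (σ ^ 2) b * σ a * b) :
    (gen σ)⁻¹ * inl a * ((gen σ)⁻¹ * inl b) * ((gen σ)⁻¹ * inl a) =
      (gen σ)⁻¹ * inl b * ((gen σ)⁻¹ * inl a) * ((gen σ)⁻¹ * inl b) := by
  have key : ∀ p q : P, gen σ ^ (3 : ℤ) * ((gen σ)⁻¹ * inl p * ((gen σ)⁻¹ * inl q) *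
      ((gen σ)⁻¹ * inl p)) = inl ((σ ^ 2) p * σ q * p) := fun p q ↦ calc
    _ = (gen σ ^ (2 : ℤ) * inl p * (gen σ ^ (2 : ℤ))⁻¹) *
        (gen σ ^ (1 : ℤ) * inl q * (gen σ ^ (1 : ℤ))⁻¹) * inl p := by group
    _ = _ := by
      rw [gen_zpow_mul_inl_mul_inv, gen_zpow_mul_inl_mul_inv, zpow_one, zpow_ofNat, map_mul,
        map_mul]
  exact mul_left_cancel ((key a b).trans ((congrArg inl h).trans (key b a).symm))

lemma commute_of_commute {a b : P} (h : σ a * b = σ b * a) :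
    (gen σ)⁻¹ * inl a * ((gen σ)⁻¹ * inl b) = (gen σ)⁻¹ * inl b * ((gen σ)⁻¹ * inl a) := by
  have key : ∀ p q : P, gen σ ^ (2 : ℤ) * ((gen σ)⁻¹ * inl p * ((gen σ)⁻¹ * inl q)) =
      inl (σ p * q) := fun p q ↦ calc
    _ = (gen σ ^ (1 : ℤ) * inl p * (gen σ ^ (1 : ℤ))⁻¹) * inl q := by group
    _ = _ := by rw [gen_zpow_mul_inl_mul_inv, zpow_one, map_mul]
  exact mul_left_cancel ((key a b).trans ((congrArg inl h).trans (key b a).symm))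

def sign : TwistedProd σ →* ℤˣ := (zpowersHom ℤˣ (-1)).comp rightHom

lemma sign_apply (s : TwistedProd σ) : sign s = s.right.toAdd.negOnePow := rfl

section Retract

variable {c : P}

lemma zpow_two_mul_apply (hc : σ ^ 2 = MulAut.conj c) (k : ℤ) (p : P) :
    (σ ^ (2 * k)) p = c ^ k * p * (c ^ k)⁻¹ := by
  rw [zpow_mul, zpow_ofNat, hc, ← map_zpow, MulAut.conj_apply]

def retract (hc : σ ^ 2 = MulAut.conj c) : (sign (σ := σ)).ker →* P where
  toFun s := s.1.left * c ^ (s.1.right.toAdd / 2)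
  map_one' := by simp
  map_mul' := by
    rintro ⟨⟨p, a⟩, ha⟩ ⟨⟨q, b⟩, hb⟩
    obtain ⟨k, hk⟩ : Even (toAdd a) := (Int.negOnePow_eq_one_iff _).mp ha
    obtain ⟨l, hl⟩ : Even (toAdd b) := (Int.negOnePow_eq_one_iff _).mp hb
    simp only [Subgroup.coe_mul, mul_left, mul_right, toAdd_mul, zpowersHom_apply]
    rw [hk, hl, ← two_mul, ← two_mul, zpow_two_mul_apply hc, ← mul_add]
    simp only [Int.mul_ediv_cancel_left _ two_ne_zero, zpow_add]
    group

lemma retract_eq (hc : σ ^ 2 = MulAut.conj c) {s : (sign (σ := σ)).ker} {a b : P}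
    (hs : (s : TwistedProd σ) = (gen σ)⁻¹ * inl a * ((gen σ)⁻¹ * inl b)) :
    retract hc s = σ⁻¹ a * c⁻¹ * b := by
  obtain ⟨s, h⟩ := s
  subst hs
  have h2 : σ.symm (σ.symm b) = c⁻¹ * b * c := by
    have := zpow_two_mul_apply hc (-1) b
    rwa [zpow_neg_one, inv_inv] at this
  simp [retract, gen, h2, mul_assoc]

end Retract

section Lift

variable {G : Type*} [Group G] {Φ : P →* G} {t : G}

lemma map_zpow_apply (hΦ : ∀ p, Φ (σ p) = t * Φ p * t⁻¹) (k : ℤ) (p : P) :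
    Φ ((σ ^ k) p) = t ^ k * Φ p * (t ^ k)⁻¹ := by
  have hinv (p : P) : Φ (σ⁻¹ p) = t⁻¹ * Φ p * t := by
    have := hΦ (σ⁻¹ p)
    rw [MulAut.apply_inv_self] at this
    rw [this]
    group
  induction k using Int.induction_on generalizing p with
  | zero => simp
  | succ k ih => rw [zpow_add_one, MulAut.mul_apply, ih, hΦ, zpow_add_one]; group
  | pred k ih =>
    rw [sub_eq_add_neg, zpow_add, zpow_neg_one, MulAut.mul_apply, ih, hinv, zpow_add,
      zpow_neg_one]
    group

variable (hΦ : ∀ p, Φ (σ p) = t * Φ p * t⁻¹)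

def lift : TwistedProd σ →* G :=
  SemidirectProduct.lift Φ (zpowersHom G t) fun k ↦ by
    ext p
    simp [map_zpow_apply hΦ, ← MulAut.conj_apply, map_zpow]

@[simp]
lemma lift_inl (p : P) : lift hΦ (inl p) = Φ p := SemidirectProduct.lift_inl ..

@[simp]
lemma lift_gen : lift hΦ (gen σ) = t := by simp [lift, gen]

lemma map_retract {c : P} (hc : σ ^ 2 = MulAut.conj c) (hΦc : Φ c = t ^ 2)
    (s : (sign (σ := σ)).ker) : Φ (retract hc s) = lift hΦ s := by
  obtain ⟨⟨p, a⟩, ha⟩ := s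
  obtain ⟨k, hk⟩ : Even (toAdd a) := (Int.negOnePow_eq_one_iff _).mp ha
  simp only [retract, lift, SemidirectProduct.lift, MonoidHom.coe_mk, OneHom.coe_mk, map_mul,
    map_zpow, hΦc, zpowersHom_apply, hk, ← two_mul, Int.mul_ediv_cancel_left _ two_ne_zero]
  rw [← zpow_natCast, ← zpow_mul]
  rfl

def kerEquiv {c : P} (hc : σ ^ 2 = MulAut.conj c) (hΦc : Φ c = t ^ 2) {ε : G →* ℤˣ}
    (hε : ∀ p, ε (Φ p) = 1) {Ψ : G →* TwistedProd σ} (hsign : ∀ g, sign (Ψ g) = ε g)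
    (hlift : ∀ g, lift hΦ (Ψ g) = g) (hretract : ∀ p h, retract hc ⟨Ψ (Φ p), h⟩ = p) :
    P ≃* ε.ker where
  toFun p := ⟨Φ p, hε p⟩
  invFun g := retract hc ⟨Ψ g, (hsign g).trans g.2⟩
  left_inv p := hretract p _
  right_inv g := Subtype.ext <| (map_retract hΦ hc hΦc _).trans (hlift g)
  map_mul' p q := Subtype.ext (map_mul Φ p q)

end Lift

end TwistedProd

end

section BraidRelations

/- The relations of `altBraidARels` evaluated at `R_0 = x x`, `R_1 = x y`, `R_j = x z`
(`R_i = x w`, `R_{i+1} = x v`), where `x, y, z` satisfy the relations of `g_0, g_1, g_j`. -/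

variable {G : Type*} [Group G] {x y z : G}

lemma altRel_zero_one_of_braid (hxy : x * y * x = y * x * y) :
    x * x * (x * y) * (x * x) = (x * y) ^ 2 * (x * x)⁻¹ * (x * y) ^ 2 :=
  calc _ = x * x * (x * y * x) * x := by group
    _ = x * x * (y * x * y) * x := by rw [hxy]
    _ = x * (x * y * x) * (y * x) := by group
    _ = x * (y * x * y) * (y * x) := by rw [hxy]
    _ = x * y * x * y * x⁻¹ * (x * y * x) := by group
    _ = x * y * x * y * x⁻¹ * (y * x * y) := by rw [hxy]
    _ = _ := by simp only [sq]; group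

lemma altRel_two_one_of_braid (hxy : x * y * x = y * x * y) (hxz : Commute x z)
    (hyz : y * z * y = z * y * z) :
    x * z * (x * y) * (x * z) = (x * y) ^ 2 * (x * x)⁻¹ * (x * z) * (x * x)⁻¹ * (x * y) ^ 2 :=
  calc _ = x * (z * x) * y * (x * z) := by group
    _ = x * (x * z) * y * (z * x) := by rw [hxz.eq]
    _ = x * x * (z * y * z) * x := by group
    _ = x * x * (y * z * y) * x := by rw [hyz]
    _ = x * (x * y * x) * x⁻¹ * z * (x⁻¹ * (x * y * x)) := by group
    _ = x * (y * x * y) * x⁻¹ * z * (x⁻¹ * (y * x * y)) := by rw [hxy]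
    _ = _ := by simp only [sq]; group

lemma altRel_two_one_sq_of_braid (hxy : x * y * x = y * x * y) (hxz : Commute x z)
    (hyz : y * z * y = z * y * z) :
    x * z * (x * y) ^ 2 * (x * z) = x * x * (x * y) * (x * z) * (x * x)⁻¹ * (x * y) * (x * x) :=
  calc _ = x * z * x * (y * x * y) * x * z := by simp only [sq]; group
    _ = x * z * x * (x * y * x) * x * z := by rw [hxy]
    _ = x * (z * (x * x)) * y * (x * x * z) := by group
    _ = x * (x * x * z) * y * (z * (x * x)) := by rw [(hxz.mul_left hxz).eq]
    _ = x * x * x * (z * y * z) * (x * x) := by group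
    _ = x * x * x * (y * z * y) * (x * x) := by rw [hyz]
    _ = x * x * x * y * (x * z * x⁻¹) * y * (x * x) := by rw [hxz.mul_inv_cancel]; group
    _ = _ := by group

lemma altRel_one_sq_mul_of_braid (hxy : x * y * x = y * x * y) (hxz : Commute x z)
    (hyz : Commute y z) : (x * y) ^ 2 * (x * z) = x * z * (x * y) * (x * x) :=
  calc _ = x * (y * x * y) * x * z := by simp only [sq]; group
    _ = x * (x * y * x) * x * z := by rw [hxy]
    _ = x * x * (y * (x * x) * z) := by group
    _ = x * x * (z * (y * (x * x))) := by rw [(hyz.mul_left (hxz.mul_left hxz)).eq]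
    _ = x * (x * z) * y * (x * x) := by group
    _ = x * (z * x) * y * (x * x) := by rw [hxz.eq]
    _ = _ := by group

lemma altRel_mul_one_sq_of_braid (hxy : x * y * x = y * x * y) (hxz : Commute x z)
    (hyz : Commute y z) : x * z * (x * y) ^ 2 = x * x * (x * y) * (x * z) :=
  calc _ = x * (z * x) * (y * x * y) := by simp only [sq]; group
    _ = x * (x * z) * (x * y * x) := by rw [hxz.eq, hxy]
    _ = x * x * (z * x) * y * x := by group
    _ = x * x * (x * z) * y * x := by rw [hxz.eq]
    _ = x * x * x * (z * (y * x)) := by group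
    _ = x * x * x * (y * x * z) := by rw [(hyz.mul_left hxz).eq]
    _ = _ := by group

lemma altRel_braid_of_braid {w v : G} (hxw : Commute x w) (hxv : Commute x v)
    (hwv : w * v * w = v * w * v) : x * w * (x * v) * (x * w) = x * v * (x * w) * (x * v) := by
  simpa only [mul_assoc, hxw.symm.left_comm, hxv.symm.left_comm] using
    congrArg (x * x * x * ·) hwv

lemma conj_mul_of_braid (hxy : x * y * x = y * x * y) :
    x * (x * y) * x⁻¹ = (x * y) ^ 2 * (x * x)⁻¹ :=
  calc _ = x * (x * y * x) * (x * x)⁻¹ := by group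
    _ = x * (y * x * y) * (x * x)⁻¹ := by rw [hxy]
    _ = _ := by simp only [sq]; group

end BraidRelations

namespace BraidGroupA

variable {n : ℕ} {i j : Fin (n + 2)}

lemma mk_of (i : Fin (n + 2)) :
    PresentedGroup.mk (braidARels n) (FreeGroup.of i) = braidAGen n i := rfl

lemma braid (hi : (i : ℕ) < n + 1) : braidAGen n i * braidAGen n (i + 1) * braidAGen n i =
    braidAGen n (i + 1) * braidAGen n i * braidAGen n (i + 1) := by
  have h := PresentedGroup.one_of_mem (rels := braidARels n) (Or.inl ⟨i, hi, rfl⟩)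
  simp only [map_mul, map_inv, mul_inv_eq_one, mk_of] at h
  exact h

lemma commute (hij : (i : ℕ) + 1 < j) : Commute (braidAGen n i) (braidAGen n j) := by
  have h := PresentedGroup.one_of_mem (rels := braidARels n) (Or.inr ⟨i, j, hij, rfl⟩)
  simp only [map_mul, map_inv, mul_inv_eq_one, mk_of] at h
  exact h

lemma braid_zero_one : braidAGen n 0 * braidAGen n 1 * braidAGen n 0 =
    braidAGen n 1 * braidAGen n 0 * braidAGen n 1 :=
  braid (i := 0) (by simp)

lemma braid_one_two (hn : 1 ≤ n) : braidAGen n 1 * braidAGen n 2 * braidAGen n 1 =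
    braidAGen n 2 * braidAGen n 1 * braidAGen n 2 :=
  braid (i := 1) (by rw [Fin.val_one]; omega)

lemma commute_zero (hj : 2 ≤ (j : ℕ)) : Commute (braidAGen n 0) (braidAGen n j) :=
  commute (by rw [Fin.val_zero]; omega)

lemma commute_one (hj : 3 ≤ (j : ℕ)) : Commute (braidAGen n 1) (braidAGen n j) :=
  commute (by rw [Fin.val_one]; omega)

lemma braidASign_braidAGen (i : Fin (n + 2)) : braidASign n (braidAGen n i) = -1 :=
  PresentedGroup.toGroup.of _

end BraidGroupA

namespace AltBraidA

open TwistedProd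

variable {n : ℕ}

lemma fin_val_two (hn : 1 ≤ n) : ((2 : Fin (n + 2)) : ℕ) = 2 :=
  Nat.mod_eq_of_lt (show 2 < n + 2 by omega)

lemma fin_val_add_one {i : Fin (n + 2)} (h : (i : ℕ) < n + 1) :
    ((i + 1 : Fin (n + 2)) : ℕ) = i + 1 :=
  Fin.val_add_one_of_lt (by rw [Fin.lt_def]; simpa using h)

lemma fin_cases_zero_one (i : Fin (n + 2)) : i = 0 ∨ i = 1 ∨ 2 ≤ (i : ℕ) := by
  rcases i with ⟨_ | _ | k, hk⟩ <;> simp [Fin.ext_iff]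

def r (i : Fin (n + 2)) : PresentedGroup (altBraidARels n) := PresentedGroup.of i

lemma mk_of (i : Fin (n + 2)) : PresentedGroup.mk (altBraidARels n) (FreeGroup.of i) = r i := rfl

variable {i j : Fin (n + 2)}

lemma rel_zero_one :
    (r 0 : PresentedGroup (altBraidARels n)) * r 1 * r 0 = r 1 ^ 2 * (r 0)⁻¹ * r 1 ^ 2 := by
  simpa only [map_mul, map_pow, map_inv, mul_inv_eq_one, mk_of] using
    PresentedGroup.one_of_mem (rels := altBraidARels n) (Or.inl rfl)

lemma commute_zero (hj : 2 ≤ (j : ℕ)) : Commute (r 0) (r j) := by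
  simpa only [commute_iff_eq, map_mul, map_pow, map_inv, mul_inv_eq_one, mk_of] using
    PresentedGroup.one_of_mem (rels := altBraidARels n) (Or.inr (Or.inl ⟨j, hj, rfl⟩))

lemma rel_two_one (hn : 1 ≤ n) : (r 2 : PresentedGroup (altBraidARels n)) * r 1 * r 2 =
    r 1 ^ 2 * (r 0)⁻¹ * r 2 * (r 0)⁻¹ * r 1 ^ 2 := by
  simpa only [map_mul, map_pow, map_inv, mul_inv_eq_one, mk_of] using
    PresentedGroup.one_of_mem (rels := altBraidARels n) (Or.inr (Or.inr (Or.inl ⟨hn, rfl⟩)))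

lemma rel_two_one_sq (hn : 1 ≤ n) : (r 2 : PresentedGroup (altBraidARels n)) * r 1 ^ 2 * r 2 =
    r 0 * r 1 * r 2 * (r 0)⁻¹ * r 1 * r 0 := by
  simpa only [map_mul, map_pow, map_inv, mul_inv_eq_one, mk_of] using
    PresentedGroup.one_of_mem (rels := altBraidARels n)
      (Or.inr (Or.inr (Or.inr (Or.inl ⟨hn, rfl⟩))))

lemma rel_one_sq_mul (hj : 3 ≤ (j : ℕ)) :
    (r 1 : PresentedGroup (altBraidARels n)) ^ 2 * r j = r j * r 1 * r 0 := by
  simpa only [map_mul, map_pow, map_inv, mul_inv_eq_one, mk_of] using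
    PresentedGroup.one_of_mem (rels := altBraidARels n)
      (Or.inr (Or.inr (Or.inr (Or.inr (Or.inl ⟨j, hj, Or.inl rfl⟩)))))

lemma rel_mul_one_sq (hj : 3 ≤ (j : ℕ)) :
    (r j : PresentedGroup (altBraidARels n)) * r 1 ^ 2 = r 0 * r 1 * r j := by
  simpa only [map_mul, map_pow, map_inv, mul_inv_eq_one, mk_of] using
    PresentedGroup.one_of_mem (rels := altBraidARels n)
      (Or.inr (Or.inr (Or.inr (Or.inr (Or.inl ⟨j, hj, Or.inr rfl⟩)))))

lemma rel_braid (hi : 2 ≤ (i : ℕ)) (hin : (i : ℕ) < n + 1) :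
    (r i : PresentedGroup (altBraidARels n)) * r (i + 1) * r i = r (i + 1) * r i * r (i + 1) := by
  simpa only [map_mul, map_pow, map_inv, mul_inv_eq_one, mk_of] using
    PresentedGroup.one_of_mem (rels := altBraidARels n)
      (Or.inr (Or.inr (Or.inr (Or.inr (Or.inr (Or.inl ⟨i, hi, hin, rfl⟩))))))

lemma commute_of_two_le (hi : 2 ≤ (i : ℕ)) (hij : (i : ℕ) + 1 < j) : Commute (r i) (r j) := by
  simpa only [commute_iff_eq, map_mul, map_pow, map_inv, mul_inv_eq_one, mk_of] using
    PresentedGroup.one_of_mem (rels := altBraidARels n)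
      (Or.inr (Or.inr (Or.inr (Or.inr (Or.inr (Or.inr ⟨i, j, hi, hij, rfl⟩))))))

lemma twist_one_sq : ((r 1 : PresentedGroup (altBraidARels n)) ^ 2 * (r 0)⁻¹) ^ 2 = r 0 * r 1 :=
  calc _ = (r 1 ^ 2 * (r 0)⁻¹ * r 1 ^ 2) * (r 0)⁻¹ := by rw [sq]; group
    _ = r 0 * r 1 := by rw [← rel_zero_one]; group

def twistImage : Fin (n + 2) → PresentedGroup (altBraidARels n) :=
  Function.update r 1 (r 1 ^ 2 * (r 0)⁻¹)

@[simp]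
lemma twistImage_one : twistImage 1 = (r 1 : PresentedGroup (altBraidARels n)) ^ 2 * (r 0)⁻¹ :=
  Function.update_self ..

@[simp]
lemma twistImage_zero : twistImage 0 = (r 0 : PresentedGroup (altBraidARels n)) :=
  Function.update_of_ne (by simp) ..

lemma twistImage_of_two_le (hj : 2 ≤ (j : ℕ)) : twistImage j = r j :=
  Function.update_of_ne (by rintro rfl; simp at hj) ..

lemma twistImage_rel_two_one (hn : 1 ≤ n) :
    (r 2 : PresentedGroup (altBraidARels n)) * (r 1 ^ 2 * (r 0)⁻¹) * r 2 =
      (r 0 * r 1) * (r 0)⁻¹ * r 2 * (r 0)⁻¹ * (r 0 * r 1) := by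
  have c := (commute_zero (n := n) (j := 2) (fin_val_two hn).ge).inv_left
  calc _ = r 2 * r 1 ^ 2 * ((r 0)⁻¹ * r 2) := by group
    _ = (r 2 * r 1 ^ 2 * r 2) * (r 0)⁻¹ := by rw [c.eq]; group
    _ = r 0 * r 1 * (r 2 * (r 0)⁻¹) * r 1 := by rw [rel_two_one_sq hn]; group
    _ = _ := by rw [← c.eq]; group

lemma twistImage_rel_two_one_sq (hn : 1 ≤ n) :
    (r 2 : PresentedGroup (altBraidARels n)) * (r 0 * r 1) * r 2 =
      r 0 * (r 1 ^ 2 * (r 0)⁻¹) * r 2 * (r 0)⁻¹ * (r 1 ^ 2 * (r 0)⁻¹) * r 0 := by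
  have c := commute_zero (n := n) (j := 2) (fin_val_two hn).ge
  calc _ = (r 2 * r 0) * r 1 * r 2 := by group
    _ = r 0 * (r 2 * r 1 * r 2) := by rw [← c.eq]; group
    _ = _ := by rw [rel_two_one hn]; group

lemma twistImage_rel_mul_one_sq (hj : 3 ≤ (j : ℕ)) :
    (r j : PresentedGroup (altBraidARels n)) * (r 0 * r 1) = r 0 * (r 1 ^ 2 * (r 0)⁻¹) * r j := by
  have c := commute_zero (n := n) (j := j) (by omega)
  calc _ = r 0 * r j * r 1 := by rw [← mul_assoc, ← c.eq]
    _ = r 0 * (r 1 ^ 2 * r j) * (r 0)⁻¹ := by rw [rel_one_sq_mul hj]; group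
    _ = r 0 * r 1 ^ 2 * (r j * (r 0)⁻¹) := by group
    _ = _ := by rw [← c.inv_left.eq]; group

lemma twistImage_mem_rels : ∀ x ∈ altBraidARels n, FreeGroup.lift twistImage x = 1 := by
  rintro x (rfl | ⟨j, hj, rfl⟩ | ⟨hn, rfl⟩ | ⟨hn, rfl⟩ | ⟨j, hj, rfl | rfl⟩ |
    ⟨i, hi, hin, rfl⟩ | ⟨i, j, hi, hij, rfl⟩) <;>
    simp only [map_mul, map_pow, map_inv, FreeGroup.lift_apply_of, mul_inv_eq_one,
      twistImage_zero, twistImage_one, twist_one_sq]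
  case inl => simp only [sq]; group
  case inr.inl => rw [twistImage_of_two_le hj]; exact commute_zero hj
  case inr.inr.inl =>
    rw [twistImage_of_two_le (fin_val_two hn).ge]; exact twistImage_rel_two_one hn
  case inr.inr.inr.inl =>
    rw [twistImage_of_two_le (fin_val_two hn).ge]; exact twistImage_rel_two_one_sq hn
  case inr.inr.inr.inr.inl.inl =>
    rw [twistImage_of_two_le (by omega), ← rel_mul_one_sq hj]; group
  case inr.inr.inr.inr.inl.inr =>
    rw [twistImage_of_two_le (by omega)]; exact twistImage_rel_mul_one_sq hj
  case inr.inr.inr.inr.inr.inl =>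
    have hi1 := fin_val_add_one hin
    rw [twistImage_of_two_le hi, twistImage_of_two_le (by omega)]; exact rel_braid hi hin
  case inr.inr.inr.inr.inr.inr =>
    rw [twistImage_of_two_le hi, twistImage_of_two_le (by omega)]; exact commute_of_two_le hi hij

def twistHom : PresentedGroup (altBraidARels n) →* PresentedGroup (altBraidARels n) :=
  PresentedGroup.toGroup twistImage_mem_rels

lemma twistHom_r (i : Fin (n + 2)) : twistHom (r i) = twistImage i := PresentedGroup.toGroup.of _

lemma twistHom_twistHom (x : PresentedGroup (altBraidARels n)) :
    twistHom (twistHom x) = r 0 * x * (r 0)⁻¹ := by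
  suffices twistHom.comp twistHom = (MulAut.conj (r 0)).toMonoidHom from
    DFunLike.congr_fun this x
  refine PresentedGroup.ext fun i ↦ ?_
  change twistHom (twistHom (r i)) = r 0 * r i * (r 0)⁻¹
  rcases fin_cases_zero_one i with rfl | rfl | hi
  · simp [twistHom_r]
  · simp [twistHom_r, twist_one_sq]
  · rw [twistHom_r, twistImage_of_two_le hi, twistHom_r, twistImage_of_two_le hi,
      (commute_zero hi).mul_inv_cancel]

noncomputable def twist : MulAut (PresentedGroup (altBraidARels n)) :=
  have hconj : twistHom ∘ twistHom = MulAut.conj (r 0) := funext twistHom_twistHom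
  MulEquiv.ofBijective twistHom
    ⟨.of_comp (f := twistHom) (hconj ▸ (MulAut.conj (r 0)).injective),
      .of_comp (g := twistHom) (hconj ▸ (MulAut.conj (r 0)).surjective)⟩

lemma twist_r (i : Fin (n + 2)) : twist (r i) = twistImage i := twistHom_r i

lemma twist_sq : twist ^ 2 = MulAut.conj (r 0 : PresentedGroup (altBraidARels n)) := by
  ext x
  exact twistHom_twistHom x

lemma ofAlt_mem_rels :
    ∀ x ∈ altBraidARels n, FreeGroup.lift (fun i ↦ braidAGen n 0 * braidAGen n i) x = 1 := by
  rintro x (rfl | ⟨j, hj, rfl⟩ | ⟨hn, rfl⟩ | ⟨hn, rfl⟩ | ⟨j, hj, rfl | rfl⟩ |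
    ⟨i, hi, hin, rfl⟩ | ⟨i, j, hi, hij, rfl⟩) <;>
    simp only [map_mul, map_pow, map_inv, FreeGroup.lift_apply_of, mul_inv_eq_one]
  · exact altRel_zero_one_of_braid BraidGroupA.braid_zero_one
  · have h := BraidGroupA.commute_zero hj
    exact (((Commute.refl _).mul_right h).mul_left ((Commute.refl _).mul_right h)).eq
  · exact altRel_two_one_of_braid BraidGroupA.braid_zero_one
      (BraidGroupA.commute_zero (fin_val_two hn).ge) (BraidGroupA.braid_one_two hn)
  · exact altRel_two_one_sq_of_braid BraidGroupA.braid_zero_one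
      (BraidGroupA.commute_zero (fin_val_two hn).ge) (BraidGroupA.braid_one_two hn)
  · exact altRel_one_sq_mul_of_braid BraidGroupA.braid_zero_one
      (BraidGroupA.commute_zero (by omega)) (BraidGroupA.commute_one hj)
  · exact altRel_mul_one_sq_of_braid BraidGroupA.braid_zero_one
      (BraidGroupA.commute_zero (by omega)) (BraidGroupA.commute_one hj)
  · have hi1 := fin_val_add_one hin
    exact altRel_braid_of_braid (BraidGroupA.commute_zero hi) (BraidGroupA.commute_zero (by omega))
      (BraidGroupA.braid hin)
  · have h0i := BraidGroupA.commute_zero hi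
    have h0j := BraidGroupA.commute_zero (j := j) (by omega)
    exact (((Commute.refl _).mul_right h0j).mul_left (h0i.symm.mul_right
      (BraidGroupA.commute hij))).eq

def ofAlt : PresentedGroup (altBraidARels n) →* BraidGroupA n :=
  PresentedGroup.toGroup ofAlt_mem_rels

lemma ofAlt_r (i : Fin (n + 2)) : ofAlt (r i) = braidAGen n 0 * braidAGen n i :=
  PresentedGroup.toGroup.of _

lemma ofAlt_twist (p : PresentedGroup (altBraidARels n)) :
    ofAlt (twist p) = braidAGen n 0 * ofAlt p * (braidAGen n 0)⁻¹ := by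
  suffices ofAlt.comp twist.toMonoidHom = (MulAut.conj (braidAGen n 0)).toMonoidHom.comp ofAlt
    from DFunLike.congr_fun this p
  refine PresentedGroup.ext fun i ↦ ?_
  change ofAlt (twist (r i)) = braidAGen n 0 * ofAlt (r i) * (braidAGen n 0)⁻¹
  rcases fin_cases_zero_one i with rfl | rfl | hi
  · rw [twist_r, twistImage_zero, ofAlt_r]; group
  · simp only [twist_r, twistImage_one, map_mul, map_pow, map_inv, ofAlt_r]
    exact (conj_mul_of_braid BraidGroupA.braid_zero_one).symm
  · rw [twist_r, twistImage_of_two_le hi, ofAlt_r,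
      ((Commute.refl _).mul_right (BraidGroupA.commute_zero hi)).mul_inv_cancel]

lemma braidASign_ofAlt (p : PresentedGroup (altBraidARels n)) : braidASign n (ofAlt p) = 1 := by
  suffices (braidASign n).comp ofAlt = 1 from DFunLike.congr_fun this p
  refine PresentedGroup.ext fun i ↦ ?_
  change braidASign n (ofAlt (r i)) = 1
  simp [ofAlt_r, BraidGroupA.braidASign_braidAGen]

lemma twist_braid_one_two (hn : 1 ≤ n) :
    (r 0 : PresentedGroup (altBraidARels n)) * r 1 * (r 0)⁻¹ * r 2 * r 1 =
      r 0 * r 2 * (r 0)⁻¹ * (r 1 ^ 2 * (r 0)⁻¹) * r 2 := by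
  rw [(commute_zero (fin_val_two hn).ge).mul_inv_cancel, twistImage_rel_two_one hn]
  group

lemma twist_commute_one (hj : 3 ≤ (j : ℕ)) :
    (r 1 : PresentedGroup (altBraidARels n)) ^ 2 * (r 0)⁻¹ * r j = r j * r 1 := by
  have c := (commute_zero (n := n) (j := j) (by omega)).inv_left
  calc _ = r 1 ^ 2 * ((r 0)⁻¹ * r j) := by group
    _ = (r 1 ^ 2 * r j) * (r 0)⁻¹ := by rw [c.eq]; group
    _ = _ := by rw [rel_one_sq_mul hj]; group

lemma toTwisted_mem_rels : ∀ x ∈ braidARels n,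
    FreeGroup.lift (fun i ↦ (gen twist)⁻¹ * inl (r i)) x = 1 := by
  rintro x (⟨i, hin, rfl⟩ | ⟨i, j, hij, rfl⟩) <;>
    simp only [map_mul, map_inv, FreeGroup.lift_apply_of, mul_inv_eq_one]
  · apply braid_of_braid
    rw [twist_sq, MulAut.conj_apply, MulAut.conj_apply, twist_r, twist_r]
    rcases fin_cases_zero_one i with rfl | rfl | hi
    · rw [zero_add, twistImage_one, twistImage_zero]
      simp only [sq]; group
    · have hn : 1 ≤ n := by rw [Fin.val_one] at hin; omega
      rw [show (1 : Fin (n + 2)) + 1 = 2 from rfl, twistImage_one,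
        twistImage_of_two_le (fin_val_two hn).ge]
      exact twist_braid_one_two hn
    · have hi' : 2 ≤ ((i + 1 : Fin (n + 2)) : ℕ) := by rw [fin_val_add_one hin]; omega
      rw [twistImage_of_two_le hi, twistImage_of_two_le hi', (commute_zero hi).mul_inv_cancel,
        (commute_zero hi').mul_inv_cancel]
      exact rel_braid hi hin
  · apply commute_of_commute
    rw [twist_r, twist_r]
    rcases fin_cases_zero_one i with rfl | rfl | hi
    · have hj : 2 ≤ (j : ℕ) := by rw [Fin.val_zero] at hij; omega
      rw [twistImage_zero, twistImage_of_two_le hj]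
      exact (commute_zero hj).eq
    · have hj : 3 ≤ (j : ℕ) := by rw [Fin.val_one] at hij; omega
      rw [twistImage_one, twistImage_of_two_le (by omega)]
      exact twist_commute_one hj
    · rw [twistImage_of_two_le hi, twistImage_of_two_le (by omega)]
      exact (commute_of_two_le hi hij).eq

noncomputable def toTwisted : BraidGroupA n →* TwistedProd (twist (n := n)) :=
  PresentedGroup.toGroup toTwisted_mem_rels

lemma toTwisted_braidAGen (i : Fin (n + 2)) :
    toTwisted (braidAGen n i) = (gen twist)⁻¹ * inl (r i) :=
  PresentedGroup.toGroup.of _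

lemma sign_toTwisted (g : BraidGroupA n) : sign (toTwisted g) = braidASign n g := by
  suffices sign.comp toTwisted = braidASign n from DFunLike.congr_fun this g
  refine PresentedGroup.ext fun i ↦ ?_
  change sign (toTwisted (braidAGen n i)) = braidASign n (braidAGen n i)
  rw [toTwisted_braidAGen, BraidGroupA.braidASign_braidAGen, TwistedProd.sign_apply]
  simp [gen]

lemma lift_toTwisted (g : BraidGroupA n) : lift ofAlt_twist (toTwisted g) = g := by
  suffices (lift ofAlt_twist).comp toTwisted = MonoidHom.id _ from DFunLike.congr_fun this g
  refine PresentedGroup.ext fun i ↦ ?_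
  change lift ofAlt_twist (toTwisted (braidAGen n i)) = braidAGen n i
  simp [toTwisted_braidAGen, ofAlt_r]

lemma retract_toTwisted_ofAlt (p : PresentedGroup (altBraidARels n))
    (h : toTwisted (ofAlt p) ∈ (sign (σ := twist (n := n))).ker) :
    retract twist_sq ⟨toTwisted (ofAlt p), h⟩ = p := by
  have mem : ∀ p, toTwisted (ofAlt p) ∈ (sign (σ := twist (n := n))).ker := fun p ↦
    (sign_toTwisted _).trans (braidASign_ofAlt p)
  suffices (retract twist_sq).comp ((toTwisted.comp ofAlt).codRestrict _ mem) = MonoidHom.id _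
    from DFunLike.congr_fun this p
  refine PresentedGroup.ext fun i ↦ ?_
  change retract twist_sq ⟨toTwisted (ofAlt (r i)), mem _⟩ = r i
  have hr0 : twist⁻¹ (r 0) = (r 0 : PresentedGroup (altBraidARels n)) :=
    (MulEquiv.symm_apply_eq twist).mpr ((twist_r 0).trans twistImage_zero).symm
  rw [retract_eq twist_sq (a := r 0) (b := r i)
    (by change toTwisted (ofAlt (r i)) = _; rw [ofAlt_r, map_mul, toTwisted_braidAGen,
      toTwisted_braidAGen]), hr0, mul_inv_cancel, one_mul]

noncomputable def altEquiv : PresentedGroup (altBraidARels n) ≃* braidAAlt n :=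
  kerEquiv ofAlt_twist twist_sq (by rw [ofAlt_r, sq]) braidASign_ofAlt sign_toTwisted
    lift_toTwisted retract_toTwisted_ofAlt

lemma altEquiv_of (i : Fin (n + 2)) :
    ((altEquiv (PresentedGroup.of i) : braidAAlt n) : BraidGroupA n) =
      braidAGen n 0 * braidAGen n i :=
  ofAlt_r i

end AltBraidA

/-- The alternating subgroup `𝓑⁺(A_{n+2})` of the type A braid group is isomorphic to the
presented group with generators `R_0, …, R_{n+1}` and the listed relations, via `R_i ↦ g_0 g_i`. -/
theorem alternating_braid_group_typeA_presentation (n : ℕ) :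
    ∃ e : PresentedGroup (altBraidARels n) ≃* braidAAlt n,
      ∀ i : Fin (n + 2),
        ((e (PresentedGroup.of i) : braidAAlt n) : BraidGroupA n) =
          braidAGen n 0 * braidAGen n i :=
  ⟨AltBraidA.altEquiv, AltBraidA.altEquiv_of⟩
end
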